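/- The generating function identity E_μ((x/2)(t − 1/t)) = Σ_{n=−∞}^{∞} J_n^μ(x) t^n holds, where J_{−n}^μ := (−1)^n J_n^μ for n ≥ 1. -/

import Mathlib

/-!
Write `x/2 (t - 1/t) = a + b` with `a = x t / 2`, `b = -x / (2t)` and expand every power
`(a + b)^m / [m]_μ!` binomially. Since `m! ≤ [m]_μ!` for `μ ≥ 0`, the resulting double series
over `(i, j) ∈ ℕ × ℕ` is dominated by `e^{|a|} e^{|b|}`, so it may be regrouped along the diagonals
`i - j = n`. Because `a b = -(x/2)^2`, the diagonal `i - j = n ≥ 0` sums to `J_n^μ(x) t^n`; the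
diagonals with `i < j` reduce to this case under `(i, j) ↦ (j, i)`, `t ↦ -1/t`.
-/

/-- The deformed integer `[n]_μ = n + μ (1 - (-1)^n)`. -/
noncomputable def dIdx (μ : ℝ) (n : ℕ) : ℝ := n + μ * (1 - (-1 : ℝ) ^ n)

/-- The deformed factorial `[n]_μ!`. -/
noncomputable def dFact (μ : ℝ) : ℕ → ℝ
  | 0 => 1
  | n + 1 => dIdx μ (n + 1) * dFact μ n

/-- The deformed exponential `E_μ(x) = Σ_{m≥0} x^m / [m]_μ!`. -/
noncomputable def Emu (μ : ℝ) (x : ℝ) : ℝ := ∑' m : ℕ, x ^ m / dFact μ m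

/-- The deformed Bessel function `J_n^μ` for `n ≥ 0`. -/
noncomputable def Jmu (μ : ℝ) (n : ℕ) (x : ℝ) : ℝ :=
  ∑' k : ℕ, (-1 : ℝ) ^ k * (Nat.factorial (2 * k + n)) /
      ((Nat.factorial k) * (Nat.factorial (k + n)) * dFact μ (2 * k + n)) *
    (x / 2) ^ (2 * k + n)

/-- `J_n^μ` for `n ∈ ℤ`, with `J_{-n}^μ = (-1)^n J_n^μ`. -/
noncomputable def JmuZ (μ : ℝ) (n : ℤ) (x : ℝ) : ℝ :=
  if 0 ≤ n then Jmu μ n.toNat x else (-1 : ℝ) ^ (-n).toNat * Jmu μ (-n).toNat x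

open Nat Finset

section Regrouping

variable {α : Type*}

theorem Summable.tsum_eq_tsum_sum_antidiagonal {A : Type*} [AddCommMonoid A] [HasAntidiagonal A]
    [AddCommMonoid α] [TopologicalSpace α] [ContinuousAdd α] [T3Space α] {f : A × A → α}
    (hf : Summable f) : ∑' p, f p = ∑' n, ∑ p ∈ antidiagonal n, f p := by
  rw [← HasAntidiagonal.sigmaAntidiagonalEquivProd.tsum_eq f]
  refine ((HasAntidiagonal.sigmaAntidiagonalEquivProd.summable_iff.2 hf).tsum_sigma'
    fun n ↦ (hasSum_fintype _).summable).trans (tsum_congr fun n ↦ ?_)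
  exact (tsum_fintype _).trans (sum_finset_coe (fun p ↦ f p) _)

def diffMinEquiv : ℤ × ℕ ≃ ℕ × ℕ where
  toFun p := (p.2 + p.1.toNat, p.2 + (-p.1).toNat)
  invFun q := ((q.1 : ℤ) - q.2, min q.1 q.2)
  left_inv := by
    rintro ⟨n, k⟩
    simp only [Prod.mk.injEq]
    omega
  right_inv := by
    rintro ⟨i, j⟩
    simp only [Prod.mk.injEq]
    omega

theorem Summable.tsum_eq_tsum_int_tsum_nat [AddCommGroup α] [UniformSpace α]
    [IsUniformAddGroup α] [CompleteSpace α] [T0Space α] {f : ℕ × ℕ → α} (hf : Summable f) :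
    ∑' p, f p = ∑' (n : ℤ) (k : ℕ), f (k + n.toNat, k + (-n).toNat) := by
  rw [← diffMinEquiv.tsum_eq]
  exact (diffMinEquiv.summable_iff.2 hf).tsum_prod

end Regrouping

section BinomialExpansion

variable {𝕜 : Type*} [NormedField 𝕜]

def binomExpansion (c : ℕ → 𝕜) (a b : 𝕜) (p : ℕ × ℕ) : 𝕜 :=
  c (p.1 + p.2) * ((p.1 + p.2).choose p.1 : 𝕜) * a ^ p.1 * b ^ p.2

theorem binomExpansion_swap (c : ℕ → 𝕜) (a b : 𝕜) (p : ℕ × ℕ) :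
    binomExpansion c a b p.swap = binomExpansion c b a p := by
  obtain ⟨i, j⟩ := p
  simp only [binomExpansion, Prod.fst_swap, Prod.snd_swap, add_comm j i]
  rw [choose_symm_add]
  ring

theorem binomExpansion_add_left (c : ℕ → 𝕜) (a b : 𝕜) (k n : ℕ) :
    binomExpansion c a b (k + n, k) =
      c (2 * k + n) * ((2 * k + n).choose k : 𝕜) * (a * b) ^ k * a ^ n := by
  simp only [binomExpansion]
  rw [choose_symm_add, show k + n + k = 2 * k + n by ring]
  ring

variable [CompleteSpace 𝕜] {c : ℕ → 𝕜}

theorem summable_binomExpansion (hc : ∀ m, ‖c m‖ ≤ (m ! : ℝ)⁻¹) (a b : 𝕜) :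
    Summable (binomExpansion c a b) := by
  refine .of_norm_bounded
    ((Real.summable_pow_div_factorial ‖a‖).mul_of_nonneg (Real.summable_pow_div_factorial ‖b‖)
      (fun _ ↦ by positivity) fun _ ↦ by positivity) ?_
  rintro ⟨i, j⟩
  calc ‖binomExpansion c a b (i, j)‖
      ≤ ((i + j)! : ℝ)⁻¹ * (i + j).choose i * ‖a‖ ^ i * ‖b‖ ^ j := by
        simp only [binomExpansion, norm_mul, norm_pow]
        gcongr
        · exact hc _
        · simpa using Nat.norm_cast_le (α := 𝕜) _
    _ = ‖a‖ ^ i / i ! * (‖b‖ ^ j / j !) := by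
        rw [cast_add_choose]
        field_simp

theorem tsum_binomExpansion (hc : ∀ m, ‖c m‖ ≤ (m ! : ℝ)⁻¹) (a b : 𝕜) :
    ∑' p, binomExpansion c a b p = ∑' m, c m * (a + b) ^ m := by
  rw [(summable_binomExpansion hc a b).tsum_eq_tsum_sum_antidiagonal]
  refine tsum_congr fun m ↦ ?_
  rw [(Commute.all a b).add_pow', mul_sum]
  refine sum_congr rfl fun p hp ↦ ?_
  obtain rfl := mem_antidiagonal.1 hp
  simp only [binomExpansion, nsmul_eq_mul]
  ring

end BinomialExpansion

theorem natCast_le_dIdx {μ : ℝ} (hμ : 0 ≤ μ) (n : ℕ) : (n : ℝ) ≤ dIdx μ n := by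
  have : (-1 : ℝ) ^ n ≤ 1 := by rcases neg_one_pow_eq_or ℝ n with h | h <;> norm_num [h]
  exact le_add_of_nonneg_right (mul_nonneg hμ (sub_nonneg.2 this))

theorem factorial_le_dFact {μ : ℝ} (hμ : 0 ≤ μ) : ∀ n : ℕ, (n ! : ℝ) ≤ dFact μ n
  | 0 => by simp [dFact]
  | n + 1 => by
    have h := natCast_le_dIdx hμ (n + 1)
    rw [factorial_succ, cast_mul, dFact]
    exact mul_le_mul h (factorial_le_dFact hμ n) (by positivity) ((cast_nonneg _).trans h)

theorem norm_inv_dFact_le {μ : ℝ} (hμ : 0 ≤ μ) (n : ℕ) : ‖(dFact μ n)⁻¹‖ ≤ (n ! : ℝ)⁻¹ := by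
  have h := factorial_le_dFact hμ n
  rw [norm_inv, Real.norm_of_nonneg ((cast_pos.2 n.factorial_pos).le.trans h)]
  exact inv_anti₀ (by positivity) h

theorem tsum_binomExpansion_add_left_eq_Jmu (μ x s b : ℝ) (hb : x / 2 * s * b = -(x / 2) ^ 2)
    (n : ℕ) :
    ∑' k, binomExpansion (fun m ↦ (dFact μ m)⁻¹) (x / 2 * s) b (k + n, k) = Jmu μ n x * s ^ n := by
  rw [Jmu, ← tsum_mul_right]
  refine tsum_congr fun k ↦ ?_
  have hchoose : ((2 * k + n).choose k : ℝ) = (2 * k + n)! / (k ! * (k + n)!) := by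
    rw [show 2 * k + n = k + (k + n) by ring, cast_add_choose]
  rw [binomExpansion_add_left, hb, hchoose, neg_pow, ← pow_mul]
  ring

theorem JmuZ_natCast (μ : ℝ) (n : ℕ) (x : ℝ) : JmuZ μ n x = Jmu μ n x := by
  simp [JmuZ]

theorem JmuZ_neg_natCast (μ : ℝ) (n : ℕ) (x : ℝ) : JmuZ μ (-n) x = (-1) ^ n * Jmu μ n x := by
  rcases n.eq_zero_or_pos with rfl | hn
  · simp [JmuZ]
  · simp [JmuZ, hn.ne']

/-- The generating function identity `E_μ((x/2)(t - 1/t)) = Σ_{n ∈ ℤ} J_n^μ(x) t^n`. -/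
theorem Jmu_generating (μ : ℝ) (hμ : 0 ≤ μ) (x t : ℝ) (ht : t ≠ 0) :
    Emu μ (x / 2 * (t - 1 / t)) = ∑' n : ℤ, JmuZ μ n x * t ^ n := by
  have hc := norm_inv_dFact_le hμ
  calc Emu μ (x / 2 * (t - 1 / t))
      = ∑' m, (dFact μ m)⁻¹ * (x / 2 * t + -(x / 2 * t⁻¹)) ^ m := by
        rw [Emu]
        exact tsum_congr fun m ↦ by ring
    _ = ∑' (n : ℤ) (k : ℕ), binomExpansion (fun m ↦ (dFact μ m)⁻¹) (x / 2 * t) (-(x / 2 * t⁻¹))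
          (k + n.toNat, k + (-n).toNat) := by
        rw [← tsum_binomExpansion hc, (summable_binomExpansion hc _ _).tsum_eq_tsum_int_tsum_nat]
    _ = ∑' n : ℤ, JmuZ μ n x * t ^ n := tsum_congr fun n ↦ ?_
  obtain ⟨n, rfl | rfl⟩ := n.eq_nat_or_neg
  · simpa [JmuZ_natCast] using
      tsum_binomExpansion_add_left_eq_Jmu μ x t _ (by field_simp) n
  · have hswap (k : ℕ) : binomExpansion (fun m ↦ (dFact μ m)⁻¹) (x / 2 * t) (-(x / 2 * t⁻¹))
        (k + (-(n : ℤ)).toNat, k + (-(-(n : ℤ))).toNat) =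
          binomExpansion (fun m ↦ (dFact μ m)⁻¹) (x / 2 * -t⁻¹) (x / 2 * t) (k + n, k) := by
      simpa using binomExpansion_swap _ (x / 2 * t) (-(x / 2 * t⁻¹)) (k + n, k)
    rw [tsum_congr hswap, tsum_binomExpansion_add_left_eq_Jmu μ x _ _ (by field_simp) n,
      JmuZ_neg_natCast, zpow_neg, zpow_natCast, neg_pow, inv_pow]
    ring
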